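/- arXiv:1102.2012 — 2 statements merged into one kernel-verified Lean document; each statement's English description precedes it below -/
import Mathlib

section
/- If C ⊆ L(Mₙ) is a right-CP-invariant cone of linear maps and Ψ : Mₙ → Mₙ, then Ψ† ∘ Φ is completely positive for all Φ ∈ C if and only if Ψ belongs to the dual cone C°. -/
open scoped ComplexOrder Pointwise
open Matrix

noncomputable section

/-- `n × n` complex matrices. -/
abbrev Mat (n : ℕ) : Type := Matrix (Fin n) (Fin n) ℂ

/-- `M_m ⊗ M_n`, realized as matrices indexed by `Fin m × Fin n`. -/
abbrev Mat2 (m n : ℕ) : Type := Matrix (Fin m × Fin n) (Fin m × Fin n) ℂ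

/-- `(id_m ⊗ Φ)(X)`: apply `Φ` to each `n × n` block of `X`. -/
def rmap {m n : ℕ} (Φ : Mat n → Mat n) (X : Mat2 m n) : Mat2 m n :=
  Matrix.of fun p q => Φ (Matrix.of fun k l => X (p.1, k) (q.1, l)) p.2 q.2

/-- `(Φ ⊗ id_n)(X)`. -/
def lmap {m n : ℕ} (Φ : Mat m → Mat m) (X : Mat2 m n) : Mat2 m n :=
  Matrix.of fun p q => Φ (Matrix.of fun i j => X (i, p.2) (j, q.2)) p.1 q.1

/-- The unnormalized maximally entangled matrix `E = Σ_{i,j} e_ie_j* ⊗ e_ie_j*`. -/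
def Emat (n : ℕ) : Mat2 n n :=
  Matrix.of fun p q => if p.1 = p.2 ∧ q.1 = q.2 then 1 else 0

/-- The Choi matrix `C_Φ = (id_n ⊗ Φ)(E)`. -/
def choi {n : ℕ} (Φ : Mat n → Mat n) : Mat2 n n := rmap Φ (Emat n)

/-- `Ψ` is the Hilbert–Schmidt adjoint of `Φ`: `Tr(Φ(X)Y) = Tr(X Ψ(Y))`. -/
def IsAdjoint {n : ℕ} (Φ Ψ : Mat n → Mat n) : Prop :=
  ∀ X Y : Mat n, ((Φ X) * Y).trace = (X * Ψ Y).trace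

/-- Complete positivity of a map on `M_n`. -/
def IsCP {n : ℕ} (Φ : Mat n → Mat n) : Prop :=
  ∀ m : ℕ, ∀ X : Mat2 m n, X.PosSemidef → (rmap Φ X).PosSemidef

/-- Positivity of a map on `M_n`. -/
def IsPos {n : ℕ} (Φ : Mat n → Mat n) : Prop :=
  ∀ X : Mat n, X.PosSemidef → (Φ X).PosSemidef

/-- `(Ad_A ⊗ id_n)(X)` for a rectangular `A ∈ M_{m₁,m₂}`, where `Ad_A(Y) = A* Y A`. -/
def adT {m₁ m₂ n : ℕ} (A : Matrix (Fin m₁) (Fin m₂) ℂ) (X : Mat2 m₁ n) : Mat2 m₂ n :=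
  Matrix.of fun p q => ∑ i, ∑ j, (star (A i p.1)) * X (i, p.2) (j, q.2) * A j q.1

/-- Tensor product `Y ⊗ Z ∈ M_n ⊗ M_n`. -/
def kron {n : ℕ} (Y Z : Mat n) : Mat2 n n :=
  Matrix.of fun p q => Y p.1 q.1 * Z p.2 q.2

/-- Block-positivity: `(v* ⊗ w*) Y (v ⊗ w) ≥ 0` for all `v, w`. -/
def BlockPos {n : ℕ} (Y : Mat2 n n) : Prop :=
  ∀ v w : Fin n → ℂ,
    0 ≤ star (fun p : Fin n × Fin n => v p.1 * w p.2) ⬝ᵥ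
        (Y *ᵥ fun p : Fin n × Fin n => v p.1 * w p.2)

/-- Separability: a sum of tensor products of positive semidefinite matrices. -/
def SepMat {n : ℕ} (Y : Mat2 n n) : Prop :=
  ∃ (k : ℕ) (Z W : Fin k → Mat n),
    (∀ i, (Z i).PosSemidef) ∧ (∀ i, (W i).PosSemidef) ∧ Y = ∑ i, kron (Z i) (W i)

/-- The dual cone of a cone of (linear) maps, under the Choi-matrix pairing. -/
def dualC {n : ℕ} (C : Set (Mat n → Mat n)) : Set (Mat n → Mat n) :=
  {Ψ | IsLinearMap ℂ Ψ ∧ ∀ Φ ∈ C, 0 ≤ ((choi Φ) * (choi Ψ)).trace}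

/-- Right-CP-invariance: closed under right composition with completely positive maps. -/
def RightCPInv {n : ℕ} (C : Set (Mat n → Mat n)) : Prop :=
  ∀ Φ ∈ C, ∀ Ψ : Mat n → Mat n, IsCP Ψ → Φ ∘ Ψ ∈ C

/-- A convex cone of maps: closed under addition and nonnegative scaling. -/
def IsConvexConeMaps {n : ℕ} (C : Set (Mat n → Mat n)) : Prop :=
  (∀ Φ ∈ C, ∀ Ψ ∈ C, Φ + Ψ ∈ C) ∧ (∀ Φ ∈ C, ∀ c : ℝ, 0 ≤ c → c • Φ ∈ C)

/-- A convex cone of matrices: closed under addition and nonnegative scaling. -/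
def IsConvexConeMat {m n : ℕ} (C : Set (Mat2 m n)) : Prop :=
  (∀ X ∈ C, ∀ Y ∈ C, X + Y ∈ C) ∧ (∀ X ∈ C, ∀ c : ℝ, 0 ≤ c → c • X ∈ C)

/-- The flip (swap) operator `F ∈ M_n ⊗ M_n`, `F(a ⊗ b) = b ⊗ a`. -/
def flipMat (n : ℕ) : Mat2 n n :=
  Matrix.of fun p q => if p.1 = q.2 ∧ p.2 = q.1 then 1 else 0

/-- Column-stacking vectorization of a matrix, as an element of `ℂⁿ ⊗ ℂⁿ`. -/
def vecM {n : ℕ} (X : Mat n) : Fin n × Fin n → ℂ := fun p => X p.2 p.1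

/-- The family of cones generated by a cone `Cₙ ⊆ Mₙ ⊗ Mₙ`:
`C_m = { Σᵢ (Ad_{Aᵢ} ⊗ id_n)(X) : Aᵢ ∈ M_{n,m}, X ∈ Cₙ }`. -/
def genCone {n : ℕ} (Cn : Set (Mat2 n n)) (m : ℕ) : Set (Mat2 m n) :=
  {Y | ∃ (k : ℕ) (A : Fin k → Matrix (Fin n) (Fin m) ℂ) (X : Mat2 n n),
    X ∈ Cn ∧ Y = ∑ i, adT (A i) X}


/-!
Write `ω = vecM 1 = Σᵢ eᵢ ⊗ eᵢ`. Adjointness turns the Choi pairing into a vector state: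
`Tr(C_Φ C_Ψ) = ω* C_{Ψ† ∘ Φ} ω`. Hence if `Ψ† ∘ Φ` is completely positive its Choi matrix is
positive semidefinite and the pairing is nonnegative. Conversely, for `X ≥ 0` in `Mₘ ⊗ Mₙ` and a
vector `u`, the state `u* (id ⊗ Λ)(X) u` of a linear `Λ` equals `ω* C_{Λ ∘ Θ} ω` for
`Θ(Y) = Σᵢⱼ ⟨uᵢ, Y uⱼ⟩ Xᵢⱼ`, which is completely positive (its Kraus operators come from a square
root of `X`). Taking `Λ = Ψ† ∘ Φ`, right-CP-invariance puts `Φ ∘ Θ` in `C`, so the state is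
nonnegative.
-/

open scoped InnerProductSpace Kronecker

lemma Matrix.posSemidef_of_dotProduct_mulVec_nonneg {k : Type*} [Fintype k] [DecidableEq k]
    {M : Matrix k k ℂ} (h : ∀ x : k → ℂ, 0 ≤ star x ⬝ᵥ (M *ᵥ x)) : M.PosSemidef := by
  have hx (x : EuclideanSpace ℂ k) : 0 ≤ ⟪x, M.toEuclideanLin x⟫_ℂ := by
    simpa [EuclideanSpace.inner_eq_star_dotProduct, dotProduct_comm] using h x
  have hreal (x : EuclideanSpace ℂ k) :
      starRingEnd ℂ ⟪x, M.toEuclideanLin x⟫_ℂ = ⟪x, M.toEuclideanLin x⟫_ℂ :=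
    Complex.conj_eq_iff_im.mpr (Complex.nonneg_iff.mp (hx x)).2.symm
  rw [← Matrix.isPositive_toEuclideanLin_iff, LinearMap.isPositive_iff,
    LinearMap.isSymmetric_iff_inner_map_self_real]
  refine ⟨fun x => ?_, fun x => ?_⟩
  · rw [← inner_conj_symm, hreal, hreal]
  · rw [← inner_conj_symm, hreal]
    exact hx x

lemma sum_mul_conjTranspose_mul_self_apply {ι κ ν : Type*} [Fintype ι] [Fintype κ] [Fintype ν]
    (Z : Matrix ι ι ℂ) (B : Matrix κ (ι × ν) ℂ) (a b : ν) :
    ∑ i, ∑ j, Z i j * (Bᴴ * B) (i, a) (j, b) =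
      (∑ r, (Matrix.of fun i a => B r (i, a))ᴴ * Z * Matrix.of fun i a => B r (i, a)) a b := by
  simp only [Matrix.sum_apply, Matrix.mul_apply, Matrix.conjTranspose_apply, Matrix.of_apply,
    Finset.mul_sum, Finset.sum_mul]
  rw [Finset.sum_comm_cycle]
  refine Finset.sum_congr rfl fun r _ => ?_
  rw [Finset.sum_comm]
  exact Finset.sum_congr rfl fun j _ => Finset.sum_congr rfl fun i _ => by ring

abbrev block {m n : ℕ} (X : Mat2 m n) (i j : Fin m) : Mat n :=
  Matrix.of fun k l => X (i, k) (j, l)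

lemma rmap_apply {m n : ℕ} (Φ : Mat n → Mat n) (X : Mat2 m n) (p q : Fin m × Fin n) :
    rmap Φ X p q = Φ (block X p.1 q.1) p.2 q.2 := rfl

lemma rmap_mul_mul_conjTranspose {m n : ℕ} (K : Mat n) (X : Mat2 m n) :
    rmap (fun Y => K * Y * Kᴴ) X = (1 ⊗ₖ K) * X * (1 ⊗ₖ K)ᴴ := by
  ext p q
  simp [rmap_apply, Matrix.mul_apply, Matrix.one_apply, Fintype.sum_prod_type, ite_mul,
    Finset.sum_mul, kroneckerMap_apply, apply_ite (starRingEnd ℂ), mul_ite]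

lemma isCP_kraus {n : ℕ} {ι : Type*} [Fintype ι] (K : ι → Mat n) :
    IsCP (fun Y => ∑ r, K r * Y * (K r)ᴴ) := by
  intro m X hX
  have hsum : rmap (fun Y => ∑ r, K r * Y * (K r)ᴴ) X =
      ∑ r, rmap (fun Y => K r * Y * (K r)ᴴ) X := by
    ext p q
    simp [rmap, Matrix.sum_apply]
  rw [hsum]
  exact Matrix.posSemidef_sum _ fun r _ => by
    rw [rmap_mul_mul_conjTranspose]
    exact hX.mul_mul_conjTranspose_same _

def thetaMap {m n : ℕ} (V : Matrix (Fin m) (Fin n) ℂ) (X : Mat2 m n) (Y : Mat n) : Mat n :=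
  Matrix.of fun a b => ∑ i, ∑ j, (V * Y * Vᴴ) i j * X (i, a) (j, b)

lemma thetaMap_single {m n : ℕ} (V : Matrix (Fin m) (Fin n) ℂ) (X : Mat2 m n) (k l : Fin n) :
    thetaMap V X (single k l 1) = ∑ i, ∑ j, (V i k * star (V j l)) • block X i j := by
  ext a b
  simp [thetaMap, Matrix.sum_apply, Matrix.mul_apply, single, ite_and]

lemma isCP_thetaMap {m n : ℕ} (V : Matrix (Fin m) (Fin n) ℂ) {X : Mat2 m n}
    (hX : X.PosSemidef) : IsCP (thetaMap V X) := by
  obtain ⟨B, rfl⟩ : ∃ B : Mat2 m n, X = star B * B := by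
    open scoped MatrixOrder in exact CStarAlgebra.nonneg_iff_eq_star_mul_self.mp hX.nonneg
  let K (r : Fin m × Fin n) : Mat n := (Matrix.of fun i a => B r (i, a))ᴴ * V
  have hkraus : thetaMap V (star B * B) = fun Y => ∑ r, K r * Y * (K r)ᴴ := by
    funext Y
    ext a b
    rw [thetaMap, Matrix.of_apply, star_eq_conjTranspose, sum_mul_conjTranspose_mul_self_apply]
    simp [K, Matrix.mul_assoc, conjTranspose_mul]
  rw [hkraus]
  exact isCP_kraus K

lemma choi_apply {n : ℕ} (Φ : Mat n → Mat n) (p q : Fin n × Fin n) :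
    choi Φ p q = Φ (single p.1 q.1 1) p.2 q.2 := rfl

lemma Emat_eq_vecMulVec (n : ℕ) : Emat n = vecMulVec (vecM 1) (star (vecM 1)) := by
  ext p q
  simp only [Emat, vecMulVec, vecM, one_apply, Matrix.of_apply, Pi.star_apply, eq_comm]
  split_ifs <;> simp_all

lemma Emat_posSemidef (n : ℕ) : (Emat n).PosSemidef := by
  rw [Emat_eq_vecMulVec]
  exact posSemidef_vecMulVec_self_star _

lemma dotProduct_choi_mulVec_vecM_one {n : ℕ} (Λ : Mat n → Mat n) :
    star (vecM (1 : Mat n)) ⬝ᵥ (choi Λ *ᵥ vecM 1) = ∑ k, ∑ l, Λ (single k l 1) k l := by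
  simp [dotProduct, mulVec, choi_apply, vecM, one_apply, Fintype.sum_prod_type, ite_mul, mul_ite]

lemma IsAdjoint.trace_choi_mul_choi {n : ℕ} {Ψ Ψd : Mat n → Mat n} (hadj : IsAdjoint Ψ Ψd)
    (Φ : Mat n → Mat n) :
    (choi Φ * choi Ψ).trace = star (vecM (1 : Mat n)) ⬝ᵥ (choi (Ψd ∘ Φ) *ᵥ vecM 1) := by
  have hentry (i j : Fin n) :
      Ψd (Φ (single i j 1)) i j = (Ψ (single j i 1) * Φ (single i j 1)).trace := by
    rw [hadj, trace_single_mul, one_smul]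
  simp only [dotProduct_choi_mulVec_vecM_one, Function.comp_apply, hentry, Matrix.trace,
    Matrix.diag, Matrix.mul_apply, Fintype.sum_prod_type, choi_apply]
  refine Finset.sum_congr rfl fun i _ => ?_
  rw [← Finset.sum_comm_cycle]
  exact Finset.sum_congr rfl fun a _ => Finset.sum_congr rfl fun j _ =>
    Finset.sum_congr rfl fun b _ => mul_comm _ _

lemma dotProduct_rmap_mulVec_eq {m n : ℕ} {Λ : Mat n → Mat n} (hΛ : IsLinearMap ℂ Λ)
    (X : Mat2 m n) (u : Fin m × Fin n → ℂ) :
    star u ⬝ᵥ (rmap Λ X *ᵥ u) =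
      star (vecM (1 : Mat n)) ⬝ᵥ
        (choi (Λ ∘ thetaMap (Matrix.of fun i k => star (u (i, k))) X) *ᵥ vecM 1) := by
  rw [dotProduct_choi_mulVec_vecM_one]
  simp only [Function.comp_apply, thetaMap_single, ← IsLinearMap.mk'_apply hΛ, map_sum,
    _root_.map_smul, Matrix.sum_apply, Matrix.smul_apply, smul_eq_mul]
  simp only [IsLinearMap.mk'_apply, dotProduct, mulVec, rmap_apply, Fintype.sum_prod_type,
    Finset.mul_sum, Matrix.of_apply, star_star, Pi.star_apply]
  rw [Finset.sum_comm]
  refine Finset.sum_congr rfl fun k _ => ?_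
  rw [Finset.sum_comm_cycle]
  exact Finset.sum_congr rfl fun l _ => Finset.sum_congr rfl fun i _ =>
    Finset.sum_congr rfl fun j _ => by ring

theorem stmt4_general (n : ℕ) (C : Set (Mat n → Mat n))
    (hClin : ∀ Φ ∈ C, IsLinearMap ℂ Φ)
    (hR : RightCPInv C)
    (Ψ Ψd : Mat n → Mat n) (hΨ : IsLinearMap ℂ Ψ) (hΨd : IsLinearMap ℂ Ψd)
    (hadj : IsAdjoint Ψ Ψd) :
    (∀ Φ ∈ C, IsCP (Ψd ∘ Φ)) ↔ Ψ ∈ dualC C := by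
  constructor
  · intro hCP
    refine ⟨hΨ, fun Φ hΦ => ?_⟩
    rw [hadj.trace_choi_mul_choi]
    exact (hCP Φ hΦ n (Emat n) (Emat_posSemidef n)).dotProduct_mulVec_nonneg _
  · intro hdual Φ hΦ m X hX
    refine Matrix.posSemidef_of_dotProduct_mulVec_nonneg fun u => ?_
    have hlin : IsLinearMap ℂ (Ψd ∘ Φ) :=
      ((IsLinearMap.mk' Ψd hΨd).comp (IsLinearMap.mk' Φ (hClin Φ hΦ))).isLinear
    rw [dotProduct_rmap_mulVec_eq hlin, Function.comp_assoc, ← hadj.trace_choi_mul_choi]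
    exact hdual.2 _ (hR Φ hΦ _ (isCP_thetaMap _ hX))

/-- For a right-CP-invariant cone `C`, `Ψ† ∘ Φ` is completely positive
for all `Φ ∈ C` iff `Ψ ∈ C°`. -/
theorem stmt4 (n : ℕ) (C : Set (Mat n → Mat n))
    (hClin : ∀ Φ ∈ C, IsLinearMap ℂ Φ)
    (hcone : IsConvexConeMaps C) (hR : RightCPInv C)
    (Ψ Ψd : Mat n → Mat n) (hΨ : IsLinearMap ℂ Ψ) (hΨd : IsLinearMap ℂ Ψd)
    (hadj : IsAdjoint Ψ Ψd) :
    (∀ Φ ∈ C, IsCP (Ψd ∘ Φ)) ↔ Ψ ∈ dualC C :=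
  stmt4_general n C hClin hR Ψ Ψd hΨ hΨd hadj
end
end

section
/- Let Cₙ ⊆ Mₙ ⊗ Mₙ be a convex cone with Sₙ ⊆ Cₙ ⊆ Pₙ (separable ⊆ Cₙ ⊆ block-positive) such that (Ad_A ⊗ idₙ)(Cₙ) ⊆ Cₙ for all A ∈ Mₙ. Define for each m: C_m := { Σᵢ (Ad_{Aᵢ} ⊗ idₙ)(X) : Aᵢ ∈ M_{n,m}, X ∈ Cₙ }. Then C₁ = Mₙ⁺ and (Ad_B ⊗ idₙ)(C_{m₁}) ⊆ C_{m₂} for all B ∈ M_{m₁,m₂}, i.e. the family {C_m} defines an operator system on Mₙ. -/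
/-!
With `A` a column vector, `(A ⊗ 1)` maps every vector to a product vector, so the compression
`(A ⊗ 1)* X (A ⊗ 1)` of a block-positive `X` is positive semidefinite; hence `C₁ ⊆ Mₙ⁺`.
Conversely a positive semidefinite `Y ∈ M₁ ⊗ Mₙ` is the compression of the separable matrix
`1 ⊗ Y` by a unit vector. Compression invariance is `Ad_B ∘ Ad_A = Ad_{AB}`.
-/

open scoped ComplexOrder Pointwise
open Matrix

noncomputable section

open scoped Kronecker

theorem Matrix.posSemidef_of_forall_dotProduct_mulVec_nonneg {ι : Type*} [Fintype ι]
    [DecidableEq ι] {M : Matrix ι ι ℂ} (h : ∀ x : ι → ℂ, 0 ≤ star x ⬝ᵥ M *ᵥ x) :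
    M.PosSemidef := by
  rw [← Matrix.isPositive_toEuclideanLin_iff, LinearMap.isPositive_iff_complex]
  intro x
  have hx := h x
  rw [EuclideanSpace.inner_eq_star_dotProduct, Matrix.ofLp_toLpLin, Matrix.toLin'_apply,
    ← star_star x.ofLp, star_dotProduct_star, star_star, dotProduct_comm,
    (IsSelfAdjoint.of_nonneg hx).star_eq]
  exact ⟨Complex.conj_eq_iff_re.mp (IsSelfAdjoint.of_nonneg hx), (Complex.nonneg_iff.mp hx).1⟩

theorem kron_eq_kronecker {n : ℕ} (Y Z : Mat n) : kron Y Z = Y ⊗ₖ Z := rfl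

section adT

variable {m₁ m₂ m₃ n : ℕ}

theorem adT_eq_conjTranspose_mul_mul (A : Matrix (Fin m₁) (Fin m₂) ℂ) (X : Mat2 m₁ n) :
    adT A X = (A ⊗ₖ (1 : Mat n))ᴴ * X * (A ⊗ₖ (1 : Mat n)) := by
  ext p q
  simp only [adT, of_apply, Matrix.mul_apply, conjTranspose_apply, kroneckerMap_apply,
    Fintype.sum_prod_type, Matrix.one_apply, mul_ite, ite_mul, mul_zero, zero_mul, mul_one,
    apply_ite (star : ℂ → ℂ), star_zero, Finset.sum_ite_eq', Finset.mem_univ, if_true]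
  rw [Finset.sum_comm]
  simp only [Finset.sum_mul, mul_assoc]

theorem adT_adT (A : Matrix (Fin m₁) (Fin m₂) ℂ) (B : Matrix (Fin m₂) (Fin m₃) ℂ)
    (X : Mat2 m₁ n) : adT B (adT A X) = adT (A * B) X := by
  have hAB : (A * B) ⊗ₖ (1 : Mat n) = (A ⊗ₖ (1 : Mat n)) * (B ⊗ₖ (1 : Mat n)) := by
    rw [← Matrix.mul_kronecker_mul, Matrix.one_mul]
  simp only [adT_eq_conjTranspose_mul_mul, hAB, conjTranspose_mul, Matrix.mul_assoc]

theorem adT_sum {ι : Type*} (s : Finset ι) (B : Matrix (Fin m₁) (Fin m₂) ℂ)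
    (X : ι → Mat2 m₁ n) : adT B (∑ i ∈ s, X i) = ∑ i ∈ s, adT B (X i) := by
  simp only [adT_eq_conjTranspose_mul_mul, Matrix.sum_mul, Matrix.mul_sum]

theorem adT_kronecker (A : Matrix (Fin m₁) (Fin m₂) ℂ) (P : Mat m₁) (Z : Mat n) :
    adT A (P ⊗ₖ Z) = (Aᴴ * P * A) ⊗ₖ Z := by
  rw [adT_eq_conjTranspose_mul_mul, conjTranspose_kronecker, ← Matrix.mul_kronecker_mul,
    ← Matrix.mul_kronecker_mul, conjTranspose_one, Matrix.one_mul, Matrix.mul_one]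

end adT

theorem BlockPos.posSemidef_adT {n : ℕ} {X : Mat2 n n} (hX : BlockPos X)
    (a : Matrix (Fin n) (Fin 1) ℂ) : (adT a X).PosSemidef := by
  refine Matrix.posSemidef_of_forall_dotProduct_mulVec_nonneg fun x => ?_
  have hprod : (a ⊗ₖ (1 : Mat n)) *ᵥ x = fun p => a p.1 0 * x (0, p.2) := by
    funext p
    simp [Matrix.mulVec, dotProduct, Fintype.sum_prod_type, Matrix.one_apply]
  rw [adT_eq_conjTranspose_mul_mul, ← Matrix.mulVec_mulVec, ← Matrix.mulVec_mulVec,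
    Matrix.dotProduct_mulVec, ← Matrix.star_mulVec, hprod]
  exact hX (fun i => a i 0) (fun k => x (0, k))

theorem sepMat_zero {n : ℕ} : SepMat (0 : Mat2 n n) :=
  ⟨0, Fin.elim0, Fin.elim0, fun i => i.elim0, fun i => i.elim0, by simp⟩

theorem sepMat_kron {n : ℕ} {Z W : Mat n} (hZ : Z.PosSemidef) (hW : W.PosSemidef) :
    SepMat (kron Z W) :=
  ⟨1, fun _ => Z, fun _ => W, fun _ => hZ, fun _ => hW, by rw [Fin.sum_univ_one]⟩

theorem eq_one_kronecker_submatrix {n : ℕ} (X : Mat2 1 n) :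
    X = (1 : Mat 1) ⊗ₖ X.submatrix (fun k => (0, k)) (fun k => (0, k)) := by
  ext ⟨i, k⟩ ⟨j, l⟩
  fin_cases i; fin_cases j
  simp

section genCone

variable {n : ℕ} {Cn : Set (Mat2 n n)}

theorem genCone_one_subset_posSemidef (hP : ∀ X ∈ Cn, BlockPos X) :
    genCone Cn 1 ⊆ {X | X.PosSemidef} := by
  rintro Y ⟨k, A, X, hX, rfl⟩
  exact posSemidef_sum _ fun i _ => (hP X hX).posSemidef_adT (A i)

theorem mem_genCone_one_of_posSemidef (hS : ∀ X : Mat2 n n, SepMat X → X ∈ Cn)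
    {X : Mat2 1 n} (hX : X.PosSemidef) : X ∈ genCone Cn 1 := by
  obtain hn | ⟨⟨z⟩⟩ := isEmpty_or_nonempty (Fin n)
  · exact ⟨0, Fin.elim0, 0, hS 0 sepMat_zero, Subsingleton.elim _ _⟩
  set X' := X.submatrix (fun k => ((0 : Fin 1), k)) (fun k => (0, k))
  set a : Matrix (Fin n) (Fin 1) ℂ := Matrix.single z 0 1
  have ha : aᴴ * (1 : Mat n) * a = 1 := by
    ext i j
    fin_cases i; fin_cases j
    simp [a, conjTranspose_single]
  refine ⟨1, fun _ => a, kron 1 X', hS _ (sepMat_kron .one (hX.submatrix _)), ?_⟩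
  rw [Fin.sum_univ_one, kron_eq_kronecker, adT_kronecker, ha]
  exact eq_one_kronecker_submatrix X

theorem adT_mem_genCone {m₁ m₂ : ℕ} (B : Matrix (Fin m₁) (Fin m₂) ℂ) {X : Mat2 m₁ n}
    (hX : X ∈ genCone Cn m₁) : adT B X ∈ genCone Cn m₂ := by
  obtain ⟨k, A, Y, hY, rfl⟩ := hX
  exact ⟨k, fun i => A i * B, Y, hY, by simp only [adT_sum, adT_adT]⟩

end genCone

theorem stmt7_general (n : ℕ) (Cn : Set (Mat2 n n))
    (hS : ∀ X : Mat2 n n, SepMat X → X ∈ Cn)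
    (hP : ∀ X ∈ Cn, BlockPos X) :
    genCone Cn 1 = {X : Mat2 1 n | X.PosSemidef} ∧
    ∀ m₁ m₂ : ℕ, ∀ B : Matrix (Fin m₁) (Fin m₂) ℂ,
      ∀ X ∈ genCone Cn m₁, adT B X ∈ genCone Cn m₂ :=
  ⟨(genCone_one_subset_posSemidef hP).antisymm fun _ => mem_genCone_one_of_posSemidef hS,
    fun _ _ B _ => adT_mem_genCone B⟩

/-- For a convex cone `Sₙ ⊆ Cₙ ⊆ Pₙ` invariant under `Ad_A ⊗ id_n`,
the generated family `{C_m}` satisfies `C₁ = Mₙ⁺` and compression invariance,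
i.e. it defines an operator system on `Mₙ`. -/
theorem stmt7 (n : ℕ) (Cn : Set (Mat2 n n))
    (hconv : IsConvexConeMat Cn)
    (hS : ∀ X : Mat2 n n, SepMat X → X ∈ Cn)
    (hP : ∀ X ∈ Cn, BlockPos X)
    (hinv : ∀ A : Mat n, ∀ X ∈ Cn, adT A X ∈ Cn) :
    genCone Cn 1 = {X : Mat2 1 n | X.PosSemidef} ∧
    ∀ m₁ m₂ : ℕ, ∀ B : Matrix (Fin m₁) (Fin m₂) ℂ,
      ∀ X ∈ genCone Cn m₁, adT B X ∈ genCone Cn m₂ :=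
  stmt7_general n Cn hS hP
end
end
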